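/- Let 0 < t < s and set τ = (1/2) * Real.log (s / (s - t)). Let N : ℝ[X] → ℝ[X] be the number operator N q = X * derivative q - s • derivative (derivative q). Then for every polynomial p ∈ ℝ[X] and every x ∈ ℝ, the Hermite semigroup equals the dilated heat semigroup: ∑'_{k : ℕ} ((-τ)^k / k!) * Polynomial.eval x (N^[k] p) = Polynomial.eval (Real.sqrt ((s - t)/s) * x) (e^{tΔ/2} p), where e^{tΔ/2} p = ∑_{k : 2k ≤ natDegree p} ((t/2)^k / k!) • derivative^[2k] p. -/

import Mathlib

open Polynomial

/-- The number operator `N_s q = X q' - s q''` on one-variable polynomials. -/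
noncomputable def numberOp (s : ℝ) (q : Polynomial ℝ) : Polynomial ℝ :=
  X * derivative q - s • derivative (derivative q)

/-- The heat operator `e^{tΔ/2} p = ∑_{2k ≤ natDegree p} ((t/2)^k/k!) p^{(2k)}` on
one-variable polynomials. -/
noncomputable def heatOp (t : ℝ) (p : Polynomial ℝ) : Polynomial ℝ :=
  ∑ k ∈ Finset.range (p.natDegree / 2 + 1),
    ((t / 2) ^ k / (k.factorial : ℝ)) • (⇑(derivative (R := ℝ)))^[2 * k] p

/-!
Conjugation by `e^{-sΔ/2}` turns the number operator into the Euler operator `X d/dX`, because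
`e^{aΔ} (X q) = X e^{aΔ} q + 2a e^{aΔ} q'`. Hence the Hermite polynomials `ψₙ = e^{-sΔ/2} Xⁿ`
satisfy `N ψₙ = n ψₙ`, and `p = ∑ qₙ ψₙ` with `q = e^{sΔ/2} p`, so the Hermite semigroup maps
`p` to `∑ qₙ e^{-nτ} ψₙ`, where `e^{-τ} = l := √((s-t)/s)`. On the other side,
`e^{tΔ/2} ψₙ = e^{(t-s)Δ/2} Xⁿ = e^{l² (-s/2) Δ} Xⁿ`, whose value at `l x` is `lⁿ ψₙ(x)`.
-/

open Finset
open scoped Nat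

theorem Polynomial.sum_range_smul_iterate_derivative_two_mul {R : Type*} [Semiring R] (c : ℕ → R)
    {p : R[X]} {M : ℕ} (h : p.natDegree < 2 * M) :
    ∑ k ∈ range M, c k • derivative^[2 * k] p =
      ∑ k ∈ range (p.natDegree / 2 + 1), c k • derivative^[2 * k] p := by
  refine (sum_subset (range_subset_range.mpr (by omega)) fun k _ hk => ?_).symm
  rw [mem_range, not_lt] at hk
  rw [iterate_derivative_eq_zero (by omega), smul_zero]

theorem sum_range_succ_pow_div_factorial_mul {K : Type*} [Field K] [CharZero K] (a b : K) (m : ℕ) :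
    ∑ k ∈ range (m + 1), a ^ k / k ! * (b ^ (m - k) / (m - k)!) = (a + b) ^ m / m ! := by
  have := congr_arg (PowerSeries.coeff m) (PowerSeries.exp_mul_exp_eq_exp_add a b)
  simpa [PowerSeries.coeff_mul, Nat.sum_antidiagonal_eq_sum_range_succ_mk, div_eq_mul_inv,
    mul_assoc, mul_left_comm] using this

theorem Module.End.hasSum_exp_series_of_mem_eigenspace {V ι : Type*} [AddCommGroup V]
    [Module ℝ V] (T : Module.End ℝ V) (ℓ : V →ₗ[ℝ] ℝ) (r : ℝ) (S : Finset ι) (c μ : ι → ℝ)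
    (v : ι → V) (hv : ∀ i ∈ S, v i ∈ T.eigenspace (μ i)) :
    HasSum (fun k : ℕ => r ^ k / k ! * ℓ ((T ^ k) (∑ i ∈ S, c i • v i)))
      (∑ i ∈ S, c i * Real.exp (r * μ i) * ℓ (v i)) := by
  have hpow : ∀ k, ∀ i ∈ S, (T ^ k) (v i) = μ i ^ k • v i := fun k i hi => by
    induction k with
    | zero => simp
    | succ k ih =>
      rw [pow_succ', Module.End.mul_apply, ih, map_smul, Module.End.mem_eigenspace_iff.1 (hv i hi),
        smul_smul, ← pow_succ]
  have hexp : ∀ i ∈ S, HasSum (fun k : ℕ => c i * ℓ (v i) * ((r * μ i) ^ k / k !))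
      (c i * Real.exp (r * μ i) * ℓ (v i)) := fun i _ => by
    rw [mul_right_comm]
    exact (Real.exp_eq_exp_ℝ ▸ NormedSpace.expSeries_div_hasSum_exp (r * μ i)).mul_left _
  convert hasSum_sum hexp using 2 with k
  rw [map_sum, map_sum, mul_sum]
  refine sum_congr rfl fun i hi => ?_
  rw [map_smul, hpow k i hi, map_smul, map_smul, smul_eq_mul, smul_eq_mul, mul_pow]
  ring

/-- `heat a = e^{aΔ}`, for every real `a`, negative ones included. -/
noncomputable def heat (a : ℝ) : ℝ[X] →ₗ[ℝ] ℝ[X] where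
  toFun p := ∑ k ∈ range (p.natDegree / 2 + 1), (a ^ k / k !) • derivative^[2 * k] p
  map_add' p q := by
    have hM : ∀ r : ℝ[X], r.natDegree ≤ max p.natDegree q.natDegree →
        r.natDegree < 2 * (max p.natDegree q.natDegree + 1) := fun r hr => by omega
    rw [← sum_range_smul_iterate_derivative_two_mul _ (hM _ (natDegree_add_le p q)),
      ← sum_range_smul_iterate_derivative_two_mul _ (hM p (le_max_left _ _)),
      ← sum_range_smul_iterate_derivative_two_mul _ (hM q (le_max_right _ _)),
      ← sum_add_distrib]
    simp only [iterate_map_add, smul_add]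
  map_smul' c p := by
    rw [RingHom.id_apply, smul_sum, ← sum_range_smul_iterate_derivative_two_mul
      (M := p.natDegree / 2 + 1) _ (by have := natDegree_smul_le c p; omega)]
    refine sum_congr rfl fun k _ => ?_
    rw [iterate_derivative_smul, smul_comm]

theorem heat_apply (a : ℝ) (p : ℝ[X]) :
    heat a p = ∑ k ∈ range (p.natDegree / 2 + 1), (a ^ k / k !) • derivative^[2 * k] p := rfl

theorem heat_apply_eq_sum_range (a : ℝ) {p : ℝ[X]} {M : ℕ} (h : p.natDegree < 2 * M) :
    heat a p = ∑ k ∈ range M, (a ^ k / k !) • derivative^[2 * k] p :=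
  (sum_range_smul_iterate_derivative_two_mul _ h).symm

theorem heatOp_eq_heat (t : ℝ) (p : ℝ[X]) : heatOp t p = heat (t / 2) p := rfl

theorem heat_zero_apply (p : ℝ[X]) : heat 0 p = p := by
  simp [heat_apply, sum_range_succ']

theorem natDegree_heat_le (a : ℝ) (p : ℝ[X]) : (heat a p).natDegree ≤ p.natDegree := by
  rw [heat_apply]
  exact natDegree_sum_le_of_forall_le _ _ fun k _ =>
    (natDegree_smul_le _ _).trans ((natDegree_iterate_derivative _ _).trans (by omega))

theorem derivative_heat (a : ℝ) (p : ℝ[X]) : derivative (heat a p) = heat a (derivative p) := by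
  rw [heat_apply_eq_sum_range a (M := p.natDegree / 2 + 1) (p := derivative p)
      (by have := natDegree_derivative_le p; omega), heat_apply, derivative_sum]
  refine sum_congr rfl fun k _ => ?_
  rw [derivative_smul, ← Function.iterate_succ_apply' derivative, Function.iterate_succ_apply]

theorem heat_heat (a b : ℝ) (p : ℝ[X]) : heat a (heat b p) = heat (a + b) p := by
  set M := p.natDegree / 2 + 1
  have hM : p.natDegree < 2 * M := by omega
  calc heat a (heat b p)
      = ∑ j ∈ range M, ∑ k ∈ range M,
          (a ^ j / j ! * (b ^ k / k !)) • derivative^[2 * (j + k)] p := by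
        rw [heat_apply_eq_sum_range a ((natDegree_heat_le b p).trans_lt hM),
          heat_apply_eq_sum_range b hM]
        simp only [iterate_derivative_sum, iterate_derivative_smul, smul_sum, smul_smul,
          ← Function.iterate_add_apply, mul_add]
    _ = ∑ j ∈ range M, ∑ k ∈ range (M - j),
          (a ^ j / j ! * (b ^ k / k !)) • derivative^[2 * (j + k)] p := by
        refine sum_congr rfl fun j _ => (sum_subset (range_subset_range.2 (by omega)) ?_).symm
        intro k _ hk
        rw [mem_range, not_lt] at hk
        rw [iterate_derivative_eq_zero (by omega), smul_zero]
    _ = ∑ m ∈ range M, ∑ k ∈ range (m + 1),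
          (a ^ k / k ! * (b ^ (m - k) / (m - k)!)) • derivative^[2 * m] p := by
        rw [← sum_range_diag_flip]
        refine sum_congr rfl fun m _ => sum_congr rfl fun k hk => ?_
        rw [Nat.add_sub_cancel' (Nat.lt_succ_iff.1 (mem_range.1 hk))]
    _ = heat (a + b) p := by
        simp only [← sum_smul, sum_range_succ_pow_div_factorial_mul]
        exact (heat_apply_eq_sum_range _ hM).symm

theorem heat_X_mul (a : ℝ) (p : ℝ[X]) :
    heat a (X * p) = X * heat a p + (2 * a) • heat a (derivative p) := by
  set N := p.natDegree / 2 + 1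
  have hXp : (X * p).natDegree < 2 * (N + 1) := by
    have := natDegree_mul_le (p := X) (q := p); rw [natDegree_X] at this; omega
  rw [heat_apply_eq_sum_range a hXp, heat_apply_eq_sum_range a (M := N + 1) (by omega),
    heat_apply_eq_sum_range a (M := N) (by have := natDegree_derivative_le p; omega), mul_sum,
    smul_sum]
  calc ∑ k ∈ range (N + 1), (a ^ k / k !) • derivative^[2 * k] (X * p)
      = ∑ k ∈ range (N + 1), (X * ((a ^ k / k !) • derivative^[2 * k] p)
          + (a ^ k / k ! * (2 * k : ℕ)) • derivative^[2 * k - 1] p) := by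
        refine sum_congr rfl fun k _ => ?_
        rw [X_mul, iterate_derivative_mul_X, mul_comm _ X, mul_smul_comm, smul_add, mul_smul (a ^ k / k !), Nat.cast_smul_eq_nsmul]
    _ = ∑ k ∈ range (N + 1), X * ((a ^ k / k !) • derivative^[2 * k] p)
          + ∑ j ∈ range N, (2 * a) • ((a ^ j / j !) • derivative^[2 * j] (derivative p)) := by
        rw [sum_add_distrib,
          sum_range_succ' (fun k => (a ^ k / k ! * (2 * k : ℕ)) • derivative^[2 * k - 1] p)]
        simp only [mul_zero, Nat.cast_zero, zero_smul, add_zero]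
        congr 1
        refine sum_congr rfl fun j _ => ?_
        rw [smul_smul, show 2 * (j + 1) - 1 = 2 * j + 1 by omega, Function.iterate_succ_apply,
          Nat.factorial_succ]
        congr 1
        push_cast
        field_simp
        ring

theorem eval_mul_heat_sq_mul_X_pow (l b x : ℝ) (n : ℕ) :
    eval (l * x) (heat (l ^ 2 * b) (X ^ n)) = l ^ n * eval x (heat b (X ^ n)) := by
  simp only [heat_apply, eval_finsetSum, eval_smul, iterate_derivative_X_pow_eq_smul,
    eval_pow, eval_X, smul_eq_mul, natDegree_X_pow, mul_sum]
  refine sum_congr rfl fun k hk => ?_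
  have hk : 2 * k ≤ n := by rw [mem_range] at hk; omega
  rw [mul_pow, mul_pow, ← pow_mul, ← pow_mul_pow_sub l hk]
  ring

noncomputable def numberOpLinear (s : ℝ) : Module.End ℝ ℝ[X] :=
  LinearMap.mulLeft ℝ X ∘ₗ derivative - s • (derivative ∘ₗ derivative)

theorem coe_numberOpLinear (s : ℝ) : ⇑(numberOpLinear s) = numberOp s := rfl

theorem numberOp_heat_neg_half (s : ℝ) (q : ℝ[X]) :
    numberOp s (heat (-s / 2) q) = heat (-s / 2) (X * derivative q) := by
  rw [numberOp, derivative_heat, derivative_heat, heat_X_mul, show 2 * (-s / 2) = -s by ring,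
    neg_smul, sub_eq_add_neg]

/-- The Hermite polynomial of variance `s`. -/
noncomputable def scaledHermite (s : ℝ) (n : ℕ) : ℝ[X] := heat (-s / 2) (X ^ n)

theorem numberOp_scaledHermite (s : ℝ) (n : ℕ) :
    numberOp s (scaledHermite s n) = (n : ℝ) • scaledHermite s n := by
  have hX : X * derivative (X ^ n : ℝ[X]) = (n : ℝ) • X ^ n := by
    rcases n with _ | n
    · simp
    · rw [derivative_X_pow, Nat.add_sub_cancel, smul_eq_C_mul, pow_succ]
      push_cast
      ring
  rw [scaledHermite, numberOp_heat_neg_half, hX, map_smul]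

theorem eq_sum_coeff_smul_scaledHermite (s : ℝ) (p : ℝ[X]) :
    p = ∑ n ∈ range ((heat (s / 2) p).natDegree + 1),
      (heat (s / 2) p).coeff n • scaledHermite s n := by
  calc p = heat (-s / 2) (heat (s / 2) p) := by
        rw [heat_heat, show -s / 2 + s / 2 = 0 by ring, heat_zero_apply]
    _ = _ := by
        conv_lhs => rw [as_sum_range_C_mul_X_pow (heat (s / 2) p)]
        simp only [← smul_eq_C_mul, map_sum, map_smul, scaledHermite]

theorem eval_mul_heat_scaledHermite {s t l : ℝ} (hl : l ^ 2 * s = s - t) (x : ℝ) (n : ℕ) :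
    eval (l * x) (heat (t / 2) (scaledHermite s n)) = l ^ n * eval x (scaledHermite s n) := by
  rw [scaledHermite, heat_heat, show t / 2 + -s / 2 = l ^ 2 * (-s / 2) by linear_combination hl / 2]
  exact eval_mul_heat_sq_mul_X_pow l _ x n

/-- The Hermite semigroup at time `τ = (1/2) log(s/(s-t))` equals the heat semigroup at
time `t` composed with the dilation by `√((s-t)/s)`. -/
theorem hermiteSemigroup_eq_dilated_heatSemigroup
    (s t : ℝ) (ht : 0 < t) (hts : t < s) (τ : ℝ)
    (hτ : τ = (1 / 2) * Real.log (s / (s - t))) (p : Polynomial ℝ) (x : ℝ) :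
    ∑' k : ℕ, ((-τ) ^ k / (k.factorial : ℝ)) *
        Polynomial.eval x ((numberOp s)^[k] p) =
      Polynomial.eval (Real.sqrt ((s - t) / s) * x) (heatOp t p) := by
  have hs : 0 < s := ht.trans hts
  have hu : 0 < (s - t) / s := div_pos (sub_pos.2 hts) hs
  have hl : Real.exp (-τ) = √((s - t) / s) := by
    rw [← Real.exp_log (Real.sqrt_pos.2 hu), Real.log_sqrt hu.le, hτ, ← inv_div (s - t),
      Real.log_inv]
    ring_nf
  have hl2 : √((s - t) / s) ^ 2 * s = s - t := by
    rw [Real.sq_sqrt hu.le, div_mul_cancel₀ _ hs.ne']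
  have hp := eq_sum_coeff_smul_scaledHermite s p
  set q := heat (s / 2) p
  have hLHS := Module.End.hasSum_exp_series_of_mem_eigenspace (numberOpLinear s)
    (leval x) (-τ) (range (q.natDegree + 1)) q.coeff (fun n => n) (scaledHermite s) fun n _ =>
      Module.End.mem_eigenspace_iff.2 (numberOp_scaledHermite s n)
  rw [← hp] at hLHS
  simp only [Module.End.coe_pow, coe_numberOpLinear, leval_apply] at hLHS
  rw [hLHS.tsum_eq, heatOp_eq_heat, hp, map_sum, eval_finsetSum]
  refine sum_congr rfl fun n _ => ?_
  rw [map_smul, eval_smul, eval_mul_heat_scaledHermite hl2, ← hl, mul_comm (-τ), Real.exp_nat_mul,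
    smul_eq_mul]
  ring
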